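/- For every real ε > 0 and every positive integer k, writing K_j = K_j(πεk) for j = 0, 1, 2, the quantity λⁿ = 2π²εk·(4K₁²K₂ + πεk·K₁·(K₁² − K₀K₂)) / (2K₀K₁K₂ + πεk·(K₁²(K₀ + K₂) − 2K₀²K₂)) satisfies the growth bounds 3π²εk < λⁿ < 3π²εk + 3π. -/

import Mathlib

open Real

/-- Modified Bessel function of the second kind of order `j`:
`K_j(z) = ∫₀^∞ exp (−z cosh t) * cosh (j t) dt`. -/
noncomputable def besselK (j : ℕ) (z : ℝ) : ℝ :=
  ∫ t in Set.Ioi (0 : ℝ), Real.exp (-z * Real.cosh t) * Real.cosh ((j : ℝ) * t)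

/-!
Put `z = π ε k` and `Mₙ = ∫₀^∞ e^{-z cosh t} coshⁿ t dt`, so that `K₀ = M₀`, `K₁ = M₁` and
`K₂ = 2 M₂ - M₀`. Integrating the derivative of `e^{-z cosh t} sinh t (d₀ + d₁ cosh t)` over
`(0, ∞)` gives linear relations between `M₀, …, M₃`, among them the recurrence
`z K₂ = z K₀ + 2 K₁`. Integrating `e^{-z cosh t}` against the nonnegative functions
`(cosh t - 1)²`, `(cosh t - 1)³` and `(K₁ - K₀ cosh t)²` then gives three inequalities between
`K₀` and `K₁`. Once `K₂` is eliminated, the quotient depends only on `z` and `u = 1 - K₀ / K₁`,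
and both bounds become polynomial inequalities in `(z, u)` on the region cut out by these
three constraints.
-/

open MeasureTheory Set Filter Topology Asymptotics

theorem Real.self_le_cosh (t : ℝ) : t ≤ cosh t := by
  rcases le_or_gt t 0 with ht | ht
  · linarith [one_le_cosh t]
  · exact (self_le_sinh_iff.2 ht.le).trans (sinh_lt_cosh t).le

theorem Real.tendsto_cosh_atTop : Tendsto cosh atTop atTop :=
  tendsto_atTop_mono self_le_cosh tendsto_id

theorem isLittleO_exp_neg_mul_cosh_mul_pow {z b : ℝ} (hbz : b < z) (n : ℕ) :
    (fun t => exp (-z * cosh t) * cosh t ^ n) =o[atTop] fun t => exp (-b * cosh t) := by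
  have h := isLittleO_exp_mul_rpow_of_lt (n : ℝ) (neg_lt_neg hbz)
  simp only [rpow_natCast] at h
  exact h.comp_tendsto tendsto_cosh_atTop

theorem tendsto_exp_neg_mul_cosh_mul_pow {z : ℝ} (hz : 0 < z) (n : ℕ) :
    Tendsto (fun t => exp (-z * cosh t) * cosh t ^ n) atTop (𝓝 0) := by
  simpa using (isLittleO_exp_neg_mul_cosh_mul_pow hz n).tendsto_div_nhds_zero

theorem integrableOn_exp_neg_mul_cosh_mul_pow {z : ℝ} (hz : 0 < z) (a : ℝ) (n : ℕ) :
    IntegrableOn (fun t => exp (-z * cosh t) * cosh t ^ n) (Ioi a) := by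
  have hdecay : (fun t => exp (-(z / 2) * cosh t)) =O[atTop] fun t => exp (-(z / 2) * t) :=
    IsBigO.of_bound' (Eventually.of_forall fun t => by
      simp only [norm_of_nonneg (exp_pos _).le, exp_le_exp]
      nlinarith [self_le_cosh t])
  refine integrable_of_isBigO_exp_neg (half_pos hz) (by fun_prop)
    ((isLittleO_exp_neg_mul_cosh_mul_pow (half_lt_self hz) n).isBigO.trans hdecay)

noncomputable def coshMoment (z : ℝ) (n : ℕ) : ℝ :=
  ∫ t in Ioi 0, exp (-z * cosh t) * cosh t ^ n

section coshMoment

variable {z : ℝ}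

theorem integrableOn_exp_neg_mul_cosh_mul_cubic (hz : 0 < z) (c₀ c₁ c₂ c₃ : ℝ) :
    IntegrableOn (fun t => exp (-z * cosh t) *
      (c₀ + c₁ * cosh t + c₂ * cosh t ^ 2 + c₃ * cosh t ^ 3)) (Ioi 0) := by
  have h (c : ℝ) (n : ℕ) := (integrableOn_exp_neg_mul_cosh_mul_pow hz 0 n).const_mul c
  exact IntegrableOn.congr_fun ((((h c₀ 0).fun_add (h c₁ 1)).fun_add (h c₂ 2)).fun_add (h c₃ 3))
    (fun t _ => by ring) measurableSet_Ioi

theorem integral_exp_neg_mul_cosh_mul_cubic (hz : 0 < z) (c₀ c₁ c₂ c₃ : ℝ) :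
    ∫ t in Ioi 0, exp (-z * cosh t) * (c₀ + c₁ * cosh t + c₂ * cosh t ^ 2 + c₃ * cosh t ^ 3) =
      c₀ * coshMoment z 0 + c₁ * coshMoment z 1 + c₂ * coshMoment z 2 +
        c₃ * coshMoment z 3 := by
  have h (c : ℝ) (n : ℕ) := (integrableOn_exp_neg_mul_cosh_mul_pow hz 0 n).const_mul c
  have hsplit : ∀ t, exp (-z * cosh t) * (c₀ + c₁ * cosh t + c₂ * cosh t ^ 2 + c₃ * cosh t ^ 3) =
      c₀ * (exp (-z * cosh t) * cosh t ^ 0) + c₁ * (exp (-z * cosh t) * cosh t ^ 1) +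
        c₂ * (exp (-z * cosh t) * cosh t ^ 2) + c₃ * (exp (-z * cosh t) * cosh t ^ 3) :=
    fun t => by ring
  simp_rw [hsplit]
  rw [integral_add (((h c₀ 0).fun_add (h c₁ 1)).fun_add (h c₂ 2)) (h c₃ 3),
    integral_add ((h c₀ 0).fun_add (h c₁ 1)) (h c₂ 2), integral_add (h c₀ 0) (h c₁ 1)]
  simp only [integral_const_mul, coshMoment]

theorem coshMoment_cubic_nonneg (hz : 0 < z) {c₀ c₁ c₂ c₃ : ℝ}
    (hc : ∀ x, 1 ≤ x → 0 ≤ c₀ + c₁ * x + c₂ * x ^ 2 + c₃ * x ^ 3) :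
    0 ≤ c₀ * coshMoment z 0 + c₁ * coshMoment z 1 + c₂ * coshMoment z 2 +
      c₃ * coshMoment z 3 := by
  rw [← integral_exp_neg_mul_cosh_mul_cubic hz]
  exact setIntegral_nonneg measurableSet_Ioi fun t _ =>
    mul_nonneg (exp_pos _).le (hc _ (one_le_cosh t))

theorem coshMoment_pos (hz : 0 < z) (n : ℕ) : 0 < coshMoment z n := by
  have hint := integrableOn_exp_neg_mul_cosh_mul_pow hz 0 n
  rw [coshMoment, setIntegral_pos_iff_support_of_nonneg_ae
    (Eventually.of_forall fun t => by positivity) hint,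
    Function.support_eq_univ fun t => by positivity, univ_inter, volume_Ioi]
  exact ENNReal.zero_lt_top

theorem tendsto_exp_neg_mul_cosh_mul_sinh_mul (hz : 0 < z) (d₀ d₁ : ℝ) :
    Tendsto (fun t => exp (-z * cosh t) * (sinh t * (d₀ + d₁ * cosh t))) atTop (𝓝 0) := by
  have h := (tendsto_exp_neg_mul_cosh_mul_pow hz 2).const_mul (|d₀| + |d₁|)
  rw [mul_zero] at h
  refine squeeze_zero_norm (fun t => ?_) h
  have hc := one_le_cosh t
  have hs : |sinh t| ≤ cosh t := by rw [abs_sinh]; exact (sinh_lt_cosh _).le.trans (by simp)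
  have hd : |d₀ + d₁ * cosh t| ≤ (|d₀| + |d₁|) * cosh t := by
    calc |d₀ + d₁ * cosh t| ≤ |d₀| + |d₁| * cosh t := by
          simpa [abs_mul, abs_of_pos (cosh_pos t)] using abs_add_le d₀ (d₁ * cosh t)
      _ ≤ (|d₀| + |d₁|) * cosh t := by nlinarith [abs_nonneg d₀]
  rw [norm_mul, norm_mul, norm_of_nonneg (exp_pos _).le, Real.norm_eq_abs, Real.norm_eq_abs]
  calc exp (-z * cosh t) * (|sinh t| * |d₀ + d₁ * cosh t|)
      ≤ exp (-z * cosh t) * (cosh t * ((|d₀| + |d₁|) * cosh t)) := by gcongr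
    _ = (|d₀| + |d₁|) * (exp (-z * cosh t) * cosh t ^ 2) := by ring

theorem coshMoment_integral_by_parts (hz : 0 < z) (d₀ d₁ : ℝ) :
    (z * d₀ - d₁) * coshMoment z 0 + (z * d₁ + d₀) * coshMoment z 1 +
      (2 * d₁ - z * d₀) * coshMoment z 2 - z * d₁ * coshMoment z 3 = 0 := by
  have hderiv : ∀ t ∈ Ici (0 : ℝ),
      HasDerivAt (fun t => exp (-z * cosh t) * (sinh t * (d₀ + d₁ * cosh t)))
        (exp (-z * cosh t) * ((z * d₀ - d₁) + (z * d₁ + d₀) * cosh t +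
          (2 * d₁ - z * d₀) * cosh t ^ 2 + -(z * d₁) * cosh t ^ 3)) t := by
    intro t _
    have hlin := ((hasDerivAt_cosh t).const_mul d₁).const_add d₀
    refine (((hasDerivAt_cosh t).const_mul (-z)).exp.fun_mul
      ((hasDerivAt_sinh t).fun_mul hlin)).congr_deriv ?_
    linear_combination (exp (-z * cosh t) * (d₁ - z * (d₀ + d₁ * cosh t))) * sinh_sq t
  have h := integral_Ioi_of_hasDerivAt_of_tendsto' hderiv
    (integrableOn_exp_neg_mul_cosh_mul_cubic hz _ _ _ _)
    (tendsto_exp_neg_mul_cosh_mul_sinh_mul hz d₀ d₁)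
  rw [integral_exp_neg_mul_cosh_mul_cubic hz, sinh_zero, zero_mul, mul_zero, sub_zero] at h
  linear_combination h

end coshMoment

theorem besselK_zero_eq_coshMoment (z : ℝ) : besselK 0 z = coshMoment z 0 := by
  simp only [besselK, coshMoment, Nat.cast_zero, zero_mul, cosh_zero, pow_zero]

theorem besselK_one_eq_coshMoment (z : ℝ) : besselK 1 z = coshMoment z 1 := by
  simp only [besselK, coshMoment, Nat.cast_one, one_mul, pow_one]

section besselK

variable {z : ℝ}

theorem besselK_two_eq_coshMoment (hz : 0 < z) :
    besselK 2 z = 2 * coshMoment z 2 - coshMoment z 0 := by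
  rw [besselK, coshMoment, coshMoment, ← integral_const_mul,
    ← integral_sub ((integrableOn_exp_neg_mul_cosh_mul_pow hz 0 2).const_mul 2)
      (integrableOn_exp_neg_mul_cosh_mul_pow hz 0 0)]
  congr 1 with t
  rw [Nat.cast_ofNat, cosh_two_mul, sinh_sq]
  ring

theorem besselK_zero_pos (hz : 0 < z) : 0 < besselK 0 z :=
  besselK_zero_eq_coshMoment z ▸ coshMoment_pos hz 0

theorem besselK_zero_le_besselK_one (hz : 0 < z) : besselK 0 z ≤ besselK 1 z := by
  have h := coshMoment_cubic_nonneg (c₀ := -1) (c₁ := 1) (c₂ := 0) (c₃ := 0) hz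
    fun x hx => by linarith
  rw [besselK_zero_eq_coshMoment, besselK_one_eq_coshMoment]
  linear_combination h

theorem mul_besselK_two (hz : 0 < z) : z * besselK 2 z = z * besselK 0 z + 2 * besselK 1 z := by
  rw [besselK_zero_eq_coshMoment, besselK_one_eq_coshMoment, besselK_two_eq_coshMoment hz]
  linear_combination -2 * coshMoment_integral_by_parts hz 1 0

theorem two_mul_mul_besselK_one_sub_besselK_zero_le (hz : 0 < z) :
    2 * z * (besselK 1 z - besselK 0 z) ≤ besselK 1 z := by
  have h := coshMoment_cubic_nonneg (c₀ := 1) (c₁ := -2) (c₂ := 1) (c₃ := 0) hz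
    fun x _ => by nlinarith [sq_nonneg (x - 1)]
  rw [besselK_zero_eq_coshMoment, besselK_one_eq_coshMoment]
  linear_combination z * h - coshMoment_integral_by_parts hz 1 0

theorem two_mul_sub_two_mul_besselK_one_le (hz : 0 < z) :
    (2 * z - 2) * besselK 1 z ≤ z * (4 * z - 1) * (besselK 1 z - besselK 0 z) := by
  have h := coshMoment_cubic_nonneg (c₀ := -1) (c₁ := 3) (c₂ := -3) (c₃ := 1) hz
    fun x hx => by nlinarith [pow_nonneg (sub_nonneg.2 hx) 3]
  rw [besselK_zero_eq_coshMoment, besselK_one_eq_coshMoment]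
  linear_combination z ^ 2 * h - z * coshMoment_integral_by_parts hz (-1) 1 -
    (2 - 2 * z) * coshMoment_integral_by_parts hz 1 0

theorem mul_besselK_one_sq_sub_besselK_zero_sq_le (hz : 0 < z) :
    z * (besselK 1 z ^ 2 - besselK 0 z ^ 2) ≤ besselK 0 z * besselK 1 z := by
  rw [besselK_zero_eq_coshMoment, besselK_one_eq_coshMoment]
  set a := coshMoment z 0
  set b := coshMoment z 1
  have h := coshMoment_cubic_nonneg (c₀ := b ^ 2) (c₁ := -2 * a * b) (c₂ := a ^ 2) (c₃ := 0) hz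
    fun x _ => by nlinarith [sq_nonneg (b - a * x)]
  have hS : b ^ 2 ≤ a * coshMoment z 2 :=
    le_of_mul_le_mul_left (by linear_combination h) (coshMoment_pos hz 0)
  linear_combination z * hS - a * coshMoment_integral_by_parts hz 1 0

end besselK

/-- `λⁿ = 2 π z · normalQuotient z K₀ K₁ K₂` with `z = π ε k` and `Kⱼ = Kⱼ(z)`. -/
noncomputable def normalQuotient (z a b c : ℝ) : ℝ :=
  (4 * b ^ 2 * c + z * b * (b ^ 2 - a * c)) /
    (2 * a * b * c + z * (b ^ 2 * (a + c) - 2 * a ^ 2 * c))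

section normalQuotient

variable {z u a b c : ℝ}

theorem normalQuotient_eq (hz : z ≠ 0) (hb : b ≠ 0) (hc : z * c = z * a + 2 * b)
    (hu : a = b * (1 - u)) :
    normalQuotient z a b c =
      (z ^ 2 * u * (2 - u) + 2 * z * (1 - u) + 8) /
        (2 * z * u * (2 - u) * (z * (1 - u) + 1) + 4 * (1 - u)) := by
  subst hu
  calc normalQuotient z (b * (1 - u)) b c
      = z * (4 * b ^ 2 * c + z * b * (b ^ 2 - b * (1 - u) * c)) /
        (z * (2 * (b * (1 - u)) * b * c + z * (b ^ 2 * (b * (1 - u) + c) -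
          2 * (b * (1 - u)) ^ 2 * c))) := (mul_div_mul_left _ _ hz).symm
    _ = b ^ 3 * (z ^ 2 * u * (2 - u) + 2 * z * (1 - u) + 8) /
        (b ^ 3 * (2 * z * u * (2 - u) * (z * (1 - u) + 1) + 4 * (1 - u))) := by
      congr 1
      · linear_combination (4 * b ^ 2 - z * b ^ 2 * (1 - u)) * hc
      · linear_combination (2 * b ^ 2 * (1 - u) + z * b ^ 2 - 2 * z * b ^ 2 * (1 - u) ^ 2) * hc
    _ = _ := mul_div_mul_left _ _ (pow_ne_zero 3 hb)

theorem normalQuotient_lower_poly (hz : 0 < z) (hu : 0 ≤ u) (hu1 : u ≤ 1)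
    (hA : 2 * z * u ≤ 1) :
    3 * (2 * z * u * (2 - u) * (z * (1 - u) + 1) + 4 * (1 - u)) <
      2 * (z ^ 2 * u * (2 - u) + 2 * z * (1 - u) + 8) := by
  nlinarith [mul_nonneg (mul_nonneg (sub_nonneg.2 hA) hz.le) (sub_nonneg.2 hu1),
    mul_nonneg (mul_nonneg (sub_nonneg.2 hA) hz.le) hu]

-- Sharp to leading order: the terms of order `z²` cancel as `z → ∞`.
theorem normalQuotient_upper_poly (hz : 0 < z) (hu : 0 ≤ u) (hu1 : u ≤ 1)
    (hA : 2 * z * u ≤ 1) (hB : 2 * z - 2 ≤ z * (4 * z - 1) * u)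
    (hC : z * u * (2 - u) ≤ 1 - u) :
    2 * z * (z ^ 2 * u * (2 - u) + 2 * z * (1 - u) + 8) <
      (3 * z + 3) * (2 * z * u * (2 - u) * (z * (1 - u) + 1) + 4 * (1 - u)) := by
  nlinarith [mul_nonneg (sub_nonneg.2 hB) (sub_nonneg.2 hC),
    mul_nonneg (mul_nonneg hz.le hu) (sub_nonneg.2 hC), mul_nonneg hz.le (sub_nonneg.2 hB)]

theorem normalQuotient_bounds (hz : 0 < z) (ha : 0 < a) (hab : a ≤ b)
    (hc : z * c = z * a + 2 * b) (hA : 2 * z * (b - a) ≤ b)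
    (hB : (2 * z - 2) * b ≤ z * (4 * z - 1) * (b - a)) (hC : z * (b ^ 2 - a ^ 2) ≤ a * b) :
    3 * z < 2 * z * normalQuotient z a b c ∧ 2 * z * normalQuotient z a b c < 3 * z + 3 := by
  have hb : 0 < b := ha.trans_le hab
  obtain ⟨u, rfl⟩ : ∃ u, a = b * (1 - u) := ⟨(b - a) / b, by field_simp; ring⟩
  have hu : 0 ≤ u := nonneg_of_mul_nonneg_right (by linarith) hb
  have hu1 : u < 1 := sub_pos.1 (pos_of_mul_pos_right ha hb.le)
  have hA' : 2 * z * u ≤ 1 := le_of_mul_le_mul_left (by linear_combination hA) hb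
  have hB' : 2 * z - 2 ≤ z * (4 * z - 1) * u :=
    le_of_mul_le_mul_left (by linear_combination hB) hb
  have hC' : z * u * (2 - u) ≤ 1 - u :=
    le_of_mul_le_mul_left (by linear_combination hC) (pow_pos hb 2)
  have hd : 0 < 2 * z * u * (2 - u) * (z * (1 - u) + 1) + 4 * (1 - u) := by
    have h1u : 0 < 1 - u := sub_pos.2 hu1
    have : 0 ≤ 2 * z * u * (2 - u) * (z * (1 - u) + 1) :=
      mul_nonneg (mul_nonneg (by positivity) (by linarith)) (add_pos (mul_pos hz h1u) one_pos).le
    linarith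
  rw [normalQuotient_eq hz.ne' hb.ne' hc rfl, ← mul_div_assoc, lt_div_iff₀ hd, div_lt_iff₀ hd]
  exact ⟨by linear_combination z * normalQuotient_lower_poly hz hu hu1.le hA',
    normalQuotient_upper_poly hz hu hu1.le hA' hB' hC'⟩

end normalQuotient

theorem stokes_normal_eigenvalue_growth (ε : ℝ) (hε : 0 < ε) (k : ℕ) (hk : 1 ≤ k) :
    3 * π ^ 2 * ε * (k : ℝ) <
      2 * π ^ 2 * ε * (k : ℝ) *
        ((4 * (besselK 1 (π * ε * (k : ℝ))) ^ 2 * besselK 2 (π * ε * (k : ℝ)) +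
            π * ε * (k : ℝ) * besselK 1 (π * ε * (k : ℝ)) *
              ((besselK 1 (π * ε * (k : ℝ))) ^ 2 -
                besselK 0 (π * ε * (k : ℝ)) * besselK 2 (π * ε * (k : ℝ)))) /
          (2 * besselK 0 (π * ε * (k : ℝ)) * besselK 1 (π * ε * (k : ℝ)) *
              besselK 2 (π * ε * (k : ℝ)) +
            π * ε * (k : ℝ) *
              ((besselK 1 (π * ε * (k : ℝ))) ^ 2 *
                  (besselK 0 (π * ε * (k : ℝ)) + besselK 2 (π * ε * (k : ℝ))) -
                2 * (besselK 0 (π * ε * (k : ℝ))) ^ 2 * besselK 2 (π * ε * (k : ℝ))))) ∧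
    2 * π ^ 2 * ε * (k : ℝ) *
        ((4 * (besselK 1 (π * ε * (k : ℝ))) ^ 2 * besselK 2 (π * ε * (k : ℝ)) +
            π * ε * (k : ℝ) * besselK 1 (π * ε * (k : ℝ)) *
              ((besselK 1 (π * ε * (k : ℝ))) ^ 2 -
                besselK 0 (π * ε * (k : ℝ)) * besselK 2 (π * ε * (k : ℝ)))) /
          (2 * besselK 0 (π * ε * (k : ℝ)) * besselK 1 (π * ε * (k : ℝ)) *
              besselK 2 (π * ε * (k : ℝ)) +
            π * ε * (k : ℝ) *
              ((besselK 1 (π * ε * (k : ℝ))) ^ 2 *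
                  (besselK 0 (π * ε * (k : ℝ)) + besselK 2 (π * ε * (k : ℝ))) -
                2 * (besselK 0 (π * ε * (k : ℝ))) ^ 2 * besselK 2 (π * ε * (k : ℝ))))) <
      3 * π ^ 2 * ε * (k : ℝ) + 3 * π := by
  have hz : 0 < π * ε * k := by
    have : (0 : ℝ) < k := by exact_mod_cast hk
    positivity
  obtain ⟨hlower, hupper⟩ := normalQuotient_bounds (c := besselK 2 (π * ε * k)) hz
    (besselK_zero_pos hz) (besselK_zero_le_besselK_one hz) (mul_besselK_two hz)
    (two_mul_mul_besselK_one_sub_besselK_zero_le hz) (two_mul_sub_two_mul_besselK_one_le hz)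
    (mul_besselK_one_sq_sub_besselK_zero_sq_le hz)
  rw [normalQuotient] at hlower hupper
  exact ⟨by linear_combination π * hlower, by linear_combination π * hupper⟩
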